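/- arXiv:2405.18364 — 3 statements merged into one kernel-verified Lean document; each statement's English description precedes it below -/
import Mathlib

section
/- Let H be a finite-dimensional complex Hilbert space and let {K_α} and {K'_α} be two families of operators on H (with the same finite index set) that define the same completely positive map, i.e. ∑_α K_α ρ K_α† = ∑_α K'_α ρ K'_α† for all operators ρ on H. If the K_α are linearly independent, then there exists a unitary matrix V = (V_{βα}) such that K'_α = ∑_β K_β V_{βα} for all α. -/
/-!
Stack the vectorised Kraus operators as the columns of matrices `A` and `B`. The entries of
`A * Aᴴ` are `∑ α, K α i j * conj (K α k l)`, which the map `ρ ↦ ∑ α, K α * ρ * (K α)ᴴ` returns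
on the matrix units, so `A * Aᴴ = B * Bᴴ`. Independent columns give `A` a left inverse `L`;
then `(1 - A * L) * B` has vanishing `M * Mᴴ`, so `B = A * (L * B)`, and `V = L * B` satisfies
`V * Vᴴ = L * A * Aᴴ * Lᴴ = 1`.
-/

open Matrix
open scoped ComplexOrder

namespace Matrix

variable {𝕜 : Type*} [RCLike 𝕜]

section Gram

variable {p ι : Type*} [Fintype p] [Fintype ι] [DecidableEq ι]

theorem exists_mul_eq_one_of_linearIndependent_col {A : Matrix p ι 𝕜}
    (hA : LinearIndependent 𝕜 A.col) : ∃ L : Matrix ι p 𝕜, L * A = 1 := by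
  have hGram : (Aᴴ * A).PosDef := .conjTranspose_mul_self A (mulVec_injective_iff.2 hA)
  refine ⟨(Aᴴ * A)⁻¹ * Aᴴ, ?_⟩
  rw [Matrix.mul_assoc, nonsing_inv_mul _ ((isUnit_iff_isUnit_det _).1 hGram.isUnit)]

variable [DecidableEq p]

theorem exists_unitary_eq_mul_of_mul_conjTranspose_eq {A B : Matrix p ι 𝕜}
    (hAB : A * Aᴴ = B * Bᴴ) (hA : LinearIndependent 𝕜 A.col) :
    ∃ V ∈ unitaryGroup ι 𝕜, B = A * V := by
  obtain ⟨L, hLA⟩ := exists_mul_eq_one_of_linearIndependent_col hA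
  have hPA : (1 - A * L) * A = 0 := by
    rw [Matrix.sub_mul, Matrix.mul_assoc, hLA, Matrix.one_mul, Matrix.mul_one, sub_self]
  have hB : B = A * (L * B) := by
    have hzero : (1 - A * L) * B * ((1 - A * L) * B)ᴴ = 0 := by
      calc (1 - A * L) * B * ((1 - A * L) * B)ᴴ
          = (1 - A * L) * (B * Bᴴ) * (1 - A * L)ᴴ := by
            simp only [conjTranspose_mul, Matrix.mul_assoc]
        _ = (1 - A * L) * A * ((1 - A * L) * A)ᴴ := by
            rw [← hAB]; simp only [conjTranspose_mul, Matrix.mul_assoc]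
        _ = 0 := by rw [hPA, Matrix.zero_mul]
    rwa [self_mul_conjTranspose_eq_zero, Matrix.sub_mul, Matrix.one_mul, sub_eq_zero,
      Matrix.mul_assoc] at hzero
  refine ⟨L * B, mem_unitaryGroup_iff.2 ?_, hB⟩
  calc L * B * star (L * B) = L * (B * Bᴴ) * Lᴴ := by
        simp only [star_eq_conjTranspose, conjTranspose_mul, Matrix.mul_assoc]
    _ = L * A * (L * A)ᴴ := by rw [← hAB]; simp only [conjTranspose_mul, Matrix.mul_assoc]
    _ = 1 := by rw [hLA, conjTranspose_one, Matrix.one_mul]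

end Gram

section Kraus

variable {m n ι : Type*}

def vecCols (K : ι → Matrix m n 𝕜) : Matrix (n × m) ι 𝕜 := (of fun α => (K α).vec)ᵀ

theorem linearIndependent_col_vecCols {K : ι → Matrix m n 𝕜} (hK : LinearIndependent 𝕜 K) :
    LinearIndependent 𝕜 (vecCols K).col :=
  let vecₗ : Matrix m n 𝕜 →ₗ[𝕜] n × m → 𝕜 := ⟨⟨vec, vec_add⟩, vec_smul⟩
  hK.map' vecₗ (LinearMap.ker_eq_bot_of_injective vec_bijective.injective)

theorem mul_single_one_mul_conjTranspose_apply {α : Type*} [Semiring α] [StarRing α]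
    [Fintype n] [DecidableEq n] (X Y : Matrix m n α) (i k : m) (j l : n) :
    (X * (single j l 1 : Matrix n n α) * Yᴴ) i k = X i j * star (Y k l) := by
  rw [mul_apply, Finset.sum_eq_single l]
  · rw [mul_single_apply_same, mul_one, conjTranspose_apply]
  · intro c _ hc
    rw [mul_single_apply_of_ne _ _ _ _ _ hc, zero_mul]
  · simp

theorem vecCols_mul_conjTranspose_apply [Fintype n] [DecidableEq n] [Fintype ι]
    (K : ι → Matrix m n 𝕜) (p q : n × m) :
    (vecCols K * (vecCols K)ᴴ) p q =
      (∑ α, K α * (single p.1 q.1 1 : Matrix n n 𝕜) * (K α)ᴴ) p.2 q.2 := by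
  simp_rw [sum_apply, mul_single_one_mul_conjTranspose_apply, mul_apply]
  rfl

theorem eq_sum_smul_of_vecCols_eq_mul [Fintype ι] {K K' : ι → Matrix m n 𝕜} {V : Matrix ι ι 𝕜}
    (h : vecCols K' = vecCols K * V) (α : ι) : K' α = ∑ β, V β α • K β := by
  ext i j
  simpa [vecCols, mul_apply, sum_apply, mul_comm] using congrFun (congrFun h (j, i)) α

end Kraus

end Matrix

/-- Two Kraus families defining the same completely positive map,
with the first family linearly independent, are related by a unitary matrix. -/
theorem kraus_unitary_freedom {n m : ℕ}
    (K K' : Fin m → Matrix (Fin n) (Fin n) ℂ)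
    (hsame : ∀ ρ : Matrix (Fin n) (Fin n) ℂ,
      ∑ α, K α * ρ * (K α)ᴴ = ∑ α, K' α * ρ * (K' α)ᴴ)
    (hindep : LinearIndependent ℂ K) :
    ∃ V : Matrix (Fin m) (Fin m) ℂ, V ∈ Matrix.unitaryGroup (Fin m) ℂ ∧
      ∀ α, K' α = ∑ β, V β α • K β := by
  have hGram : vecCols K * (vecCols K)ᴴ = vecCols K' * (vecCols K')ᴴ := by
    ext p q
    rw [vecCols_mul_conjTranspose_apply, vecCols_mul_conjTranspose_apply, hsame]
  obtain ⟨V, hV, hK'⟩ :=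
    exists_unitary_eq_mul_of_mul_conjTranspose_eq hGram (linearIndependent_col_vecCols hindep)
  exact ⟨V, hV, eq_sum_smul_of_vecCols_eq_mul hK'⟩
end

section
/- Let E(ρ) = ∑_α K_α ρ K_α† with ∑_α K_α† K_α = I and let U be a unitary satisfying ∑_α K_α† U K_α = e^{iφ} U for some phase e^{iφ}. Then U K_α U† = e^{iφ} K_α for all α, i.e. the Heisenberg-picture condition implies the strong symmetry condition on the Kraus operators. -/
open Matrix BigOperators Complex

/-- the Heisenberg-picture condition `∑ Kᴴ U K = e^{iφ} U` for a
unitary `U` implies the strong symmetry condition `U K U† = e^{iφ} K`. -/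
theorem heisenberg_implies_strong_symmetry {n m : ℕ}
    (K : Fin m → Matrix (Fin n) (Fin n) ℂ)
    (U : Matrix (Fin n) (Fin n) ℂ) (φ : ℝ)
    (hcomp : ∑ α, (K α)ᴴ * K α = 1)
    (hU : U ∈ Matrix.unitaryGroup (Fin n) ℂ)
    (hheis : ∑ α, (K α)ᴴ * U * K α = Complex.exp (φ * Complex.I) • U) :
    ∀ α, U * K α * Uᴴ = Complex.exp (φ * Complex.I) • K α := by
  set c := Complex.exp (φ * Complex.I) with hc
  have hUU : Uᴴ * U = 1 := hU.1
  have hUUt : U * Uᴴ = 1 := mul_eq_one_comm.mp hUU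
  have hcc : star c * c = 1 := by
    rw [hc, Complex.star_def, ← Complex.exp_conj, ← Complex.exp_add]
    simp
  have hheis' : ∑ α, (K α)ᴴ * Uᴴ * K α = star c • Uᴴ := by
    have h := congrArg conjTranspose hheis
    simp only [conjTranspose_sum, conjTranspose_mul, conjTranspose_smul,
      conjTranspose_conjTranspose] at h
    rw [← h]
    refine Finset.sum_congr rfl fun α _ => ?_
    noncomm_ring
  -- the sum of the positive operators (U K - c K U)ᴴ (U K - c K U) vanishes
  have hsum : ∑ α, (U * K α - c • (K α * U))ᴴ * (U * K α - c • (K α * U)) = 0 := by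
    have expand : ∀ α, (U * K α - c • (K α * U))ᴴ * (U * K α - c • (K α * U))
        = (K α)ᴴ * (Uᴴ * U) * K α - star c • (Uᴴ * ((K α)ᴴ * U * K α))
          - c • (((K α)ᴴ * Uᴴ * K α) * U)
          + (star c * c) • (Uᴴ * ((K α)ᴴ * K α) * U) := by
      intro α
      simp only [conjTranspose_sub, conjTranspose_mul, conjTranspose_smul, sub_mul, mul_sub,
        smul_mul_assoc, mul_smul_comm, smul_smul, smul_sub, mul_assoc]
      module
    calc ∑ α, (U * K α - c • (K α * U))ᴴ * (U * K α - c • (K α * U))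
        = ∑ α, ((K α)ᴴ * (Uᴴ * U) * K α - star c • (Uᴴ * ((K α)ᴴ * U * K α))
            - c • (((K α)ᴴ * Uᴴ * K α) * U)
            + (star c * c) • (Uᴴ * ((K α)ᴴ * K α) * U)) :=
          Finset.sum_congr rfl fun α _ => expand α
      _ = (∑ α, (K α)ᴴ * K α) - star c • (Uᴴ * (∑ α, (K α)ᴴ * U * K α))
            - c • ((∑ α, (K α)ᴴ * Uᴴ * K α) * U)
            + (star c * c) • (Uᴴ * (∑ α, (K α)ᴴ * K α) * U) := by
          simp [Finset.sum_sub_distrib, Finset.sum_add_distrib, hUU, Finset.mul_sum,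
            Finset.sum_mul, Finset.smul_sum]
      _ = 0 := by
          rw [hcomp, hheis, hheis', hcc]
          simp only [smul_smul, smul_mul_assoc, mul_smul_comm, mul_one, one_mul, one_smul, hUU]
          rw [mul_comm (star c) c] at hcc ⊢
          rw [hcc]
          simp
  -- hence each summand is zero
  have hzero : ∀ α, U * K α - c • (K α * U) = 0 := by
    have htr := congrArg Matrix.trace hsum
    rw [Matrix.trace_sum, Matrix.trace_zero] at htr
    have htrace : ∀ (M : Matrix (Fin n) (Fin n) ℂ),
        Matrix.trace (Mᴴ * M) = ((∑ j, ∑ i, Complex.normSq (M i j) : ℝ) : ℂ) := by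
      intro M
      simp [Matrix.trace, Matrix.mul_apply, Matrix.diag, Matrix.conjTranspose_apply,
        Complex.normSq_eq_conj_mul_self]
    simp only [htrace] at htr
    rw [← Complex.ofReal_sum] at htr
    have htr' : ∑ α, ∑ j, ∑ i, Complex.normSq ((U * K α - c • (K α * U)) i j) = 0 := by
      exact_mod_cast htr
    intro α
    have h1 : ∀ α ∈ Finset.univ,
        (0:ℝ) ≤ ∑ j, ∑ i, Complex.normSq ((U * K α - c • (K α * U)) i j) := by
      intro α _
      exact Finset.sum_nonneg fun _ _ => Finset.sum_nonneg fun _ _ => Complex.normSq_nonneg _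
    have h2 := (Finset.sum_eq_zero_iff_of_nonneg h1).mp htr' α (Finset.mem_univ α)
    ext i j
    have h3 : ∀ j ∈ Finset.univ,
        (0:ℝ) ≤ ∑ i, Complex.normSq ((U * K α - c • (K α * U)) i j) := by
      intro j _; exact Finset.sum_nonneg fun _ _ => Complex.normSq_nonneg _
    have h4 := (Finset.sum_eq_zero_iff_of_nonneg h3).mp h2 j (Finset.mem_univ j)
    have h5 := (Finset.sum_eq_zero_iff_of_nonneg (fun i _ =>
      Complex.normSq_nonneg _)).mp h4 i (Finset.mem_univ i)
    simpa using Complex.normSq_eq_zero.mp h5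
  intro α
  have h := hzero α
  have h' : U * K α = c • (K α * U) := by
    rwa [sub_eq_zero] at h
  rw [h', smul_mul_assoc, mul_assoc, hUUt, mul_one]
end

section
/- Let {K_p} be a finite family of 3×3 complex matrices with ∑_p K_p† K_p = I₃, and let P be an orthogonal projection on ℂ³. If ∑_p K_p† P K_p = P, then P K_p = K_p P for every p. -/
open Matrix BigOperators

/-- if a Kraus family preserves an orthogonal projection `P` in
the Heisenberg picture, `∑ Kᴴ P K = P`, then every Kraus operator commutes
with `P`. -/
theorem heisenberg_fixed_projection_commutes {m : ℕ}
    (K : Fin m → Matrix (Fin 3) (Fin 3) ℂ)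
    (P : Matrix (Fin 3) (Fin 3) ℂ)
    (hP_herm : Pᴴ = P) (hP_idem : P * P = P)
    (hcomp : ∑ p, (K p)ᴴ * K p = 1)
    (hfix : ∑ p, (K p)ᴴ * P * K p = P) :
    ∀ p, P * K p = K p * P := by
  set C : Fin m → Matrix (Fin 3) (Fin 3) ℂ := fun p => P * K p - K p * P with hC
  have expand : ∀ p, (C p)ᴴ * C p
      = (K p)ᴴ * P * K p - ((K p)ᴴ * P * K p) * P - P * ((K p)ᴴ * P * K p)
        + P * ((K p)ᴴ * K p) * P := by
    intro p
    have h1 : (C p)ᴴ = (K p)ᴴ * P - P * (K p)ᴴ := by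
      simp [hC, conjTranspose_mul, hP_herm]
    rw [h1, hC]
    have e1 : ((K p)ᴴ * P) * (P * K p) = (K p)ᴴ * (P * P) * K p := by noncomm_ring
    have e2 : ((K p)ᴴ * P) * (K p * P) = ((K p)ᴴ * P * K p) * P := by noncomm_ring
    have e3 : (P * (K p)ᴴ) * (P * K p) = P * ((K p)ᴴ * P * K p) := by noncomm_ring
    have e4 : (P * (K p)ᴴ) * (K p * P) = P * ((K p)ᴴ * K p) * P := by noncomm_ring
    rw [sub_mul, mul_sub, mul_sub, e1, e2, e3, e4, hP_idem]
    noncomm_ring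
  have hS : ∑ p, (C p)ᴴ * C p = 0 := by
    calc ∑ p, (C p)ᴴ * C p
        = ∑ p, ((K p)ᴴ * P * K p - ((K p)ᴴ * P * K p) * P - P * ((K p)ᴴ * P * K p)
            + P * ((K p)ᴴ * K p) * P) := Finset.sum_congr rfl (fun p _ => expand p)
      _ = (∑ p, (K p)ᴴ * P * K p) - (∑ p, (K p)ᴴ * P * K p) * P
            - P * (∑ p, (K p)ᴴ * P * K p) + P * (∑ p, (K p)ᴴ * K p) * P := by
          simp [Finset.sum_sub_distrib, Finset.sum_add_distrib, Finset.sum_mul,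
            Finset.mul_sum]
      _ = 0 := by rw [hfix, hcomp]; simp [hP_idem]
  have hCzero : ∀ p, C p = 0 := by
    intro p
    ext i j
    have hdiag : (∑ q, (C q)ᴴ * C q) j j = 0 := by rw [hS]; rfl
    have hdiag' : ∑ q, ∑ k, Complex.normSq (C q k j) = 0 := by
      have : (∑ q, (C q)ᴴ * C q) j j = ∑ q, ∑ k, ((C q k j)) * (starRingEnd ℂ) (C q k j) := by
        simp [Matrix.sum_apply, Matrix.mul_apply, conjTranspose_apply, mul_comm]
      rw [this] at hdiag
      have : ((∑ q, ∑ k, Complex.normSq (C q k j) : ℝ) : ℂ) = 0 := by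
        push_cast
        rw [← hdiag]
        congr 1; ext q; congr 1; ext k
        rw [Complex.mul_conj]
      exact_mod_cast this
    have hq : Complex.normSq (C p i j) = 0 := by
      have h1 : ∑ k, Complex.normSq (C p k j) = 0 := by
        have := (Finset.sum_eq_zero_iff_of_nonneg (fun q _ =>
          Finset.sum_nonneg (fun k _ => Complex.normSq_nonneg _))).mp hdiag' p (by simp)
        exact this
      exact (Finset.sum_eq_zero_iff_of_nonneg (fun k _ =>
        Complex.normSq_nonneg _)).mp h1 i (by simp)
    simpa using Complex.normSq_eq_zero.mp hq
  intro p
  have := hCzero p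
  rw [hC] at this
  simpa [sub_eq_zero] using this
end
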